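/- arXiv:2508.21002 — 3 statements merged into one kernel-verified Lean document; each statement's English description precedes it below -/
import Mathlib

section
/- Let N = 2^n with n ≥ 5 (so N ≥ 32 ≥ 22), let H_N be the normalized Hadamard matrix of size N, and let y ∈ ℝ^N be any fixed unit vector. Let d be uniformly distributed on {−1,+1}^N and z be uniformly distributed on {−1/√N, +1/√N}^N, independently, and set x = D·H_N·z where D = diag(d). Then Pr[ |⟨x, y⟩| > 1/(2N) ] ≥ 3/5. -/
/-!
Write `ε` for the sign vector `√N · z`. Then `⟨x, y⟩ = N^{-1/2} ∑ⱼ εⱼ mⱼ` with `m = H_N D y`, a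
unit vector, so the event fails iff `|∑ⱼ εⱼ mⱼ| ≤ t := 1/(2√N)`. Coordinates with `|mⱼ| ≤ t` carry
at most `N t² = 1/4` of the mass, so by Cauchy–Schwarz the number `K` of the other ones satisfies
`K · ∑ⱼ mⱼ⁴ ≥ 9/16`. Each `mⱼ` is a Rademacher sum in `d` with `∑ coefficients² = 1/N`, so the
fourth-moment (Khintchine) bound gives `E ∑ⱼ mⱼ⁴ ≤ 3/N`, and Markov's inequality yields
`Pr[K ≤ k] ≤ 16k/(3N) ≤ k/6` as `N ≥ 32`. For fixed `d`, the Littlewood–Offord bound of Erdős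
(via Sperner's theorem) gives `Pr_ε[|∑ⱼ εⱼ mⱼ| ≤ t] ≤ C(k, ⌊k/2⌋)/2^k` for every `k ≤ K`, that is
`1/2`, `3/8` or `5/16` according as `K ≤ 2`, `K ≤ 4` or `K ≥ 5`. Averaging over `d`, the event
fails with probability at most `5/16 + (1/16)(2/3) + (1/8)(1/3) = 19/48 < 2/5`.
-/

set_option autoImplicit false

open Matrix

/-- The normalized Hadamard matrix of size `N = 2^n`: the `n`-fold Kronecker power of
`(1/√2)·[[1,1],[1,-1]]`, with rows and columns indexed by `Fin n → Fin 2`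
(a type of cardinality `2^n`). -/
noncomputable def hadamardMatrix (n : ℕ) :
    Matrix (Fin n → Fin 2) (Fin n → Fin 2) ℝ :=
  Matrix.of fun a b =>
    ∏ i : Fin n, (if a i = 1 ∧ b i = 1 then -(1 / Real.sqrt 2) else 1 / Real.sqrt 2)

open Finset

namespace Rademacher

noncomputable def boolSign (b : Bool) : ℝ := if b then 1 else -1

lemma boolSign_not (b : Bool) : boolSign (!b) = -boolSign b := by
  cases b <;> simp [boolSign]

lemma boolSign_sq (b : Bool) : boolSign b ^ 2 = 1 := by
  cases b <;> norm_num [boolSign]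

lemma boolSign_mul_eq (b : Bool) (x : ℝ) :
    boolSign b * x = (if b = decide (0 < x) then 2 * |x| else 0) - |x| := by
  rcases lt_or_ge 0 x with hx | hx <;> cases b <;>
    simp [boolSign, hx, abs_of_pos, abs_of_nonpos, not_lt.2] <;> ring

section Moments

variable {ι : Type*} [DecidableEq ι]

noncomputable def rademacherSum (s : Finset ι) (c : ι → ℝ) (d : ι → Bool) : ℝ :=
  ∑ i ∈ s, boolSign (d i) * c i

lemma rademacherSum_insert {s : Finset ι} {a : ι} (ha : a ∉ s) (c : ι → ℝ) (d : ι → Bool) :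
    rademacherSum (insert a s) c d = boolSign (d a) * c a + rademacherSum s c d :=
  sum_insert ha

lemma rademacherSum_update {s : Finset ι} {a : ι} (ha : a ∉ s) (c : ι → ℝ) (d : ι → Bool)
    (b : Bool) : rademacherSum s c (Function.update d a b) = rademacherSum s c d :=
  sum_congr rfl fun i hi => by rw [Function.update_of_ne (ne_of_mem_of_not_mem hi ha)]

variable [Fintype ι]

/-- Flipping the sign `d a` is an involution of the cube that negates the summand. -/
lemma sum_boolSign_mul_eq_zero (a : ι) (F : (ι → Bool) → ℝ)
    (hF : ∀ d b, F (Function.update d a b) = F d) :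
    ∑ d, boolSign (d a) * F d = 0 := by
  let flip : (ι → Bool) → ι → Bool := fun d => Function.update d a (!d a)
  have hflip : Function.Involutive flip := fun d => by simp [flip]
  have h := Equiv.sum_comp (hflip.toPerm flip) fun d => boolSign (d a) * F d
  simp only [Function.Involutive.coe_toPerm, flip, Function.update_self, boolSign_not, hF,
    neg_mul, sum_neg_distrib] at h
  linarith

lemma sum_rademacherSum_sq (s : Finset ι) (c : ι → ℝ) :
    ∑ d, rademacherSum s c d ^ 2 = 2 ^ Fintype.card ι * ∑ i ∈ s, c i ^ 2 := by
  induction s using Finset.induction_on with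
  | empty => simp [rademacherSum]
  | @insert a s ha ih =>
    set Y := rademacherSum s c
    have hexpand : ∀ d, rademacherSum (insert a s) c d ^ 2
        = c a ^ 2 + 2 * c a * (boolSign (d a) * Y d) + Y d ^ 2 := fun d => by
      rw [rademacherSum_insert ha]
      linear_combination c a ^ 2 * boolSign_sq (d a)
    have hodd := sum_boolSign_mul_eq_zero a Y (rademacherSum_update ha c)
    simp only [hexpand, sum_add_distrib, ← mul_sum, hodd, ih, sum_const, card_univ,
      Fintype.card_fun, Fintype.card_bool, nsmul_eq_mul, sum_insert ha]
    push_cast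
    ring

lemma sum_rademacherSum_pow_four_le (s : Finset ι) (c : ι → ℝ) :
    ∑ d, rademacherSum s c d ^ 4 ≤ 3 * 2 ^ Fintype.card ι * (∑ i ∈ s, c i ^ 2) ^ 2 := by
  induction s using Finset.induction_on with
  | empty => simp [rademacherSum]
  | @insert a s ha ih =>
    set Y := rademacherSum s c
    have hexpand : ∀ d, rademacherSum (insert a s) c d ^ 4
        = c a ^ 4 + 4 * c a ^ 3 * (boolSign (d a) * Y d) + 6 * c a ^ 2 * Y d ^ 2
          + 4 * c a * (boolSign (d a) * Y d ^ 3) + Y d ^ 4 := fun d => by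
      rw [rademacherSum_insert ha]
      linear_combination (c a ^ 4 * (boolSign (d a) ^ 2 + 1)
        + 4 * c a ^ 3 * Y d * boolSign (d a) + 6 * c a ^ 2 * Y d ^ 2) * boolSign_sq (d a)
    have hupdate := rademacherSum_update ha c
    have hodd₁ := sum_boolSign_mul_eq_zero a Y hupdate
    have hodd₃ := sum_boolSign_mul_eq_zero a (Y · ^ 3) fun d b => by simp only [Y, hupdate]
    have hsq : ∑ d, Y d ^ 2 = 2 ^ Fintype.card ι * ∑ i ∈ s, c i ^ 2 := sum_rademacherSum_sq s c
    simp only [hexpand, sum_add_distrib, ← mul_sum, hodd₁, hodd₃, hsq, sum_const, card_univ,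
      Fintype.card_fun, Fintype.card_bool, nsmul_eq_mul, sum_insert ha]
    push_cast
    have hP : (0 : ℝ) ≤ 2 ^ Fintype.card ι := by positivity
    nlinarith [mul_nonneg hP (by positivity : 0 ≤ c a ^ 4)]

end Moments

section LittlewoodOfford

variable {ι : Type*} [DecidableEq ι]

lemma sum_add_lt_sum_of_ssubset (w : ι → ℝ) {J : Finset ι} {δ : ℝ} (hδ : 0 ≤ δ)
    (hJ : ∀ j ∈ J, δ < w j) {A B : Finset ι} (hAB : A ⊂ B) (hBA : B \ A ⊆ J) :
    ∑ j ∈ A, w j + δ < ∑ j ∈ B, w j := by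
  obtain ⟨j, hj⟩ := sdiff_nonempty.2 (not_subset_of_ssubset hAB)
  have hpos : ∀ i ∈ B \ A, 0 ≤ w i := fun i hi => hδ.trans (hJ i (hBA hi)).le
  rw [← sum_sdiff hAB.subset]
  linarith [hJ j (hBA hj), single_le_sum hpos hj]

variable [Fintype ι]

/-- On each fibre of `A ↦ A \ J`, the sets `A ∩ J` form an antichain by
`sum_add_lt_sum_of_ssubset`, so Sperner's theorem bounds the fibre. -/
theorem card_filter_sum_mem_Icc_le (w : ι → ℝ) {J : Finset ι} {δ : ℝ} (hδ : 0 ≤ δ)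
    (hJ : ∀ j ∈ J, δ < w j) (c : ℝ) :
    #{A : Finset ι | ∑ j ∈ A, w j ∈ Set.Icc c (c + δ)} ≤
      (#J).choose (#J / 2) * 2 ^ (Fintype.card ι - #J) := by
  set S : Finset (Finset ι) := {A | ∑ j ∈ A, w j ∈ Set.Icc c (c + δ)}
  have hcompl : #(Jᶜ.powerset) = 2 ^ (Fintype.card ι - #J) := by
    rw [card_powerset, card_compl]
  rw [← hcompl]
  refine card_le_mul_card_image_of_maps_to (f := (· \ J))
    (fun A _ => mem_powerset.2 fun x hx => mem_compl.2 (mem_sdiff.1 hx).2) _ fun B _ => ?_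
  set F := {A ∈ S | A \ J = B}
  have hF : ∀ A ∈ F, A ∈ S ∧ A \ J = B := fun A hA => mem_filter.1 hA
  have hinj : Set.InjOn (fun A : Finset ι => A.subtype (· ∈ J)) F := by
    intro A₁ h₁ A₂ h₂ heq
    ext x
    by_cases hx : x ∈ J
    · simpa [hx] using congrArg (⟨x, hx⟩ ∈ ·) heq
    · simpa [hx] using congrArg (x ∈ ·) ((hF A₁ h₁).2.trans (hF A₂ h₂).2.symm)
  have hanti : IsAntichain (· ⊆ ·)
      (SetLike.coe (F.image fun A : Finset ι => A.subtype (· ∈ J))) := by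
    rintro _ hA₁ _ hA₂ hne hsub
    obtain ⟨A₁, h₁, rfl⟩ := mem_image.1 hA₁
    obtain ⟨A₂, h₂, rfl⟩ := mem_image.1 hA₂
    have hsdiff : A₁ \ J = A₂ \ J := (hF A₁ h₁).2.trans (hF A₂ h₂).2.symm
    have hss : A₁ ⊂ A₂ := by
      refine ssubset_of_subset_of_ne (fun x hx => ?_) (fun h => hne (h ▸ rfl))
      by_cases hxJ : x ∈ J
      · exact mem_subtype.1 (hsub (mem_subtype (a := ⟨x, hxJ⟩) |>.2 hx))
      · exact (mem_sdiff.1 (hsdiff ▸ mem_sdiff.2 ⟨hx, hxJ⟩)).1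
    have hJ' : A₂ \ A₁ ⊆ J := fun x hx => by
      by_contra hxJ
      obtain ⟨hx₂, hx₁⟩ := mem_sdiff.1 hx
      exact hx₁ (mem_sdiff.1 (hsdiff ▸ mem_sdiff.2 ⟨hx₂, hxJ⟩ : x ∈ A₁ \ J)).1
    have hlt := sum_add_lt_sum_of_ssubset w hδ hJ hss hJ'
    have hm₁ := (mem_filter.1 (hF A₁ h₁).1).2
    have hm₂ := (mem_filter.1 (hF A₂ h₂).1).2
    linarith [hm₁.1, hm₂.2]
  calc #F = #(F.image fun A : Finset ι => A.subtype (· ∈ J)) := (card_image_of_injOn hinj).symm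
    _ ≤ _ := by simpa using hanti.sperner

/-- With `A = {j | εⱼ = sign aⱼ}`, `∑ⱼ εⱼ aⱼ = ∑_{j ∈ A} 2|aⱼ| - ∑ⱼ |aⱼ|` is a subset sum. -/
theorem card_filter_abs_sum_boolSign_mul_le (a : ι → ℝ) {t : ℝ} (ht : 0 ≤ t) {J : Finset ι}
    (hJ : ∀ j ∈ J, t < |a j|) :
    #{ε : ι → Bool | |∑ j, boolSign (ε j) * a j| ≤ t} ≤
      (#J).choose (#J / 2) * 2 ^ (Fintype.card ι - #J) := by
  let φ : (ι → Bool) → Finset ι := fun ε => {j | ε j = decide (0 < a j)}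
  have hsum : ∀ ε, ∑ j, boolSign (ε j) * a j = ∑ j ∈ φ ε, 2 * |a j| - ∑ j, |a j| := fun ε => by
    simp only [φ, sum_filter, ← sum_sub_distrib, boolSign_mul_eq]
  refine le_trans ?_ (card_filter_sum_mem_Icc_le (fun j => 2 * |a j|) (by positivity : 0 ≤ 2 * t)
    (fun j hj => by linarith [hJ j hj]) (∑ j, |a j| - t))
  refine card_le_card_of_injOn φ (fun ε hε => ?_) (fun ε₁ _ ε₂ _ h => funext fun j => ?_)
  · simp only [coe_filter, mem_univ, true_and, Set.mem_ofPred_eq, hsum, abs_le] at hε ⊢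
    constructor <;> linarith
  · have := congrArg (j ∈ ·) h
    simp only [φ, mem_filter, mem_univ, true_and, eq_iff_iff] at this
    revert this
    cases ε₁ j <;> cases ε₂ j <;> cases decide (0 < a j) <;> simp

end LittlewoodOfford

section Anticoncentration

variable {ι Ω : Type*} [Fintype ι]

noncomputable def largeCoords (t : ℝ) (v : ι → ℝ) : Finset ι := {j | t < |v j|}

lemma sq_sub_card_mul_sq_le_card_largeCoords_mul_sum_pow_four (v : ι → ℝ) {t : ℝ}
    (ht : Fintype.card ι * t ^ 2 ≤ ∑ j, v j ^ 2) :
    (∑ j, v j ^ 2 - Fintype.card ι * t ^ 2) ^ 2 ≤ #(largeCoords t v) * ∑ j, v j ^ 4 := by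
  have hsmall : ∑ j ∈ {j | ¬ t < |v j|}, v j ^ 2 ≤ Fintype.card ι * t ^ 2 :=
    calc ∑ j ∈ {j | ¬ t < |v j|}, v j ^ 2 ≤ ∑ j ∈ {j | ¬ t < |v j|}, t ^ 2 :=
          sum_le_sum fun j hj => by
            simpa only [sq_abs] using
              pow_le_pow_left₀ (abs_nonneg _) (not_lt.1 (mem_filter.1 hj).2) 2
      _ ≤ Fintype.card ι * t ^ 2 := by
          rw [sum_const, nsmul_eq_mul]
          gcongr
          exact_mod_cast card_le_univ _
  have hsplit := sum_filter_add_sum_filter_not univ (fun j => t < |v j|) (fun j => v j ^ 2)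
  calc (∑ j, v j ^ 2 - Fintype.card ι * t ^ 2) ^ 2 ≤ (∑ j ∈ largeCoords t v, v j ^ 2) ^ 2 :=
        pow_le_pow_left₀ (by linarith) (by rw [largeCoords]; linarith) 2
    _ ≤ #(largeCoords t v) * ∑ j ∈ largeCoords t v, (v j ^ 2) ^ 2 := sq_sum_le_card_mul_sum_sq
    _ ≤ #(largeCoords t v) * ∑ j, (v j ^ 2) ^ 2 := by
        gcongr
        exact subset_univ _
    _ = #(largeCoords t v) * ∑ j, v j ^ 4 := by simp only [← pow_mul]

lemma card_filter_card_largeCoords_le [Fintype Ω] (v : Ω → ι → ℝ) {t : ℝ}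
    (hι : 32 ≤ Fintype.card ι) (hmass : ∀ ω, 9 / 16 ≤ #(largeCoords t (v ω)) * ∑ j, v ω j ^ 4)
    (hv4 : ∑ ω, ∑ j, v ω j ^ 4 ≤ 3 * Fintype.card Ω / Fintype.card ι) {k : ℕ} (hk : 1 ≤ k) :
    (#{ω | #(largeCoords t (v ω)) ≤ k} : ℝ) ≤ k / 6 * Fintype.card Ω := by
  set T := ({ω | #(largeCoords t (v ω)) ≤ k} : Finset Ω)
  have hmarkov : #T • (9 / (16 * k) : ℝ) ≤ ∑ ω ∈ T, ∑ j, v ω j ^ 4 :=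
    card_nsmul_le_sum _ _ _ fun ω hω => by
      have hK : (#(largeCoords t (v ω)) : ℝ) ≤ k := by exact_mod_cast (mem_filter.1 hω).2
      have hS : 0 ≤ ∑ j, v ω j ^ 4 := sum_nonneg fun j _ => by positivity
      rw [div_le_iff₀ (by positivity)]
      nlinarith [hmass ω, mul_le_mul_of_nonneg_right hK hS]
  have hsub : ∑ ω ∈ T, ∑ j, v ω j ^ 4 ≤ ∑ ω, ∑ j, v ω j ^ 4 :=
    sum_le_sum_of_subset_of_nonneg (subset_univ _) fun ω _ _ => sum_nonneg fun j _ => by positivity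
  have hι' : 3 * Fintype.card Ω / Fintype.card ι ≤ (3 * Fintype.card Ω / 32 : ℝ) :=
    div_le_div_of_nonneg_left (by positivity) (by norm_num) (by exact_mod_cast hι)
  rw [nsmul_eq_mul] at hmarkov
  calc (#T : ℝ) = #T * (9 / (16 * k)) * (16 * k / 9) := by field_simp
    _ ≤ 3 * Fintype.card Ω / 32 * (16 * k / 9) := by gcongr; linarith
    _ = k / 6 * Fintype.card Ω := by ring

/-- The Littlewood–Offord bound `C(k, ⌊k/2⌋) / 2^k` for `k = 1, 3, 5`. -/
noncomputable def loBound (k : ℕ) : ℝ :=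
  if k ≤ 2 then 1 / 2 else if k ≤ 4 then 3 / 8 else 5 / 16

lemma sum_loBound_le (s : Finset Ω) (K : Ω → ℕ) (h₂ : (#{ω ∈ s | K ω ≤ 2} : ℝ) ≤ #s / 3)
    (h₄ : (#{ω ∈ s | K ω ≤ 4} : ℝ) ≤ 2 * #s / 3) :
    ∑ ω ∈ s, loBound (K ω) ≤ 19 / 48 * #s := by
  have hlayers : ∀ k, loBound k =
      5 / 16 + (if k ≤ 4 then 1 / 16 else 0) + (if k ≤ 2 then 1 / 8 else 0) := fun k => by
    unfold loBound
    split_ifs <;> first | omega | norm_num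
  simp only [hlayers, sum_add_distrib, ← sum_filter, sum_const, nsmul_eq_mul]
  linarith

variable [DecidableEq ι]

lemma card_filter_abs_sum_boolSign_mul_le_loBound (a : ι → ℝ) {t : ℝ} (ht : 0 ≤ t)
    (hlarge : 1 ≤ #(largeCoords t a)) :
    (#{ε : ι → Bool | |∑ j, boolSign (ε j) * a j| ≤ t} : ℝ) ≤
      loBound #(largeCoords t a) * 2 ^ Fintype.card ι := by
  obtain ⟨k, hk, hbound⟩ : ∃ k ≤ #(largeCoords t a),
      ((k.choose (k / 2) : ℕ) : ℝ) / 2 ^ k = loBound #(largeCoords t a) := by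
    unfold loBound
    split_ifs
    exacts [⟨1, hlarge, by norm_num⟩, ⟨3, by omega, by norm_num [Nat.choose]⟩,
      ⟨5, by omega, by norm_num [Nat.choose]⟩]
  obtain ⟨J, hJ, rfl⟩ := exists_subset_card_eq hk
  have hLO := card_filter_abs_sum_boolSign_mul_le a ht fun j hj => (mem_filter.1 (hJ hj)).2
  have hpow : (2 : ℝ) ^ Fintype.card ι = 2 ^ (Fintype.card ι - #J) * 2 ^ #J := by
    rw [← pow_add, Nat.sub_add_cancel (card_le_univ J)]
  rw [← hbound, hpow]
  calc _ ≤ (((#J).choose (#J / 2) : ℕ) : ℝ) * 2 ^ (Fintype.card ι - #J) := by exact_mod_cast hLO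
    _ = _ := by field_simp

lemma card_filter_prod_eq_sum [Fintype Ω] (P : Ω → (ι → Bool) → Prop)
    [∀ ω ε, Decidable (P ω ε)] :
    #{p : Ω × (ι → Bool) | P p.1 p.2} = ∑ ω, #{ε | P ω ε} := by
  simp only [card_filter, Fintype.sum_prod_type]

theorem card_filter_abs_sum_boolSign_mul_le_of_sum_pow_four_le [Fintype Ω] (v : Ω → ι → ℝ)
    {t : ℝ} (ht : 0 ≤ t) (hι : 32 ≤ Fintype.card ι) (hιt : Fintype.card ι * t ^ 2 ≤ 1 / 4)
    (hv : ∀ ω, ∑ j, v ω j ^ 2 = 1)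
    (hv4 : ∑ ω, ∑ j, v ω j ^ 4 ≤ 3 * Fintype.card Ω / Fintype.card ι) :
    (#{p : Ω × (ι → Bool) | |∑ j, boolSign (p.2 j) * v p.1 j| ≤ t} : ℝ) ≤
      19 / 48 * (Fintype.card Ω * 2 ^ Fintype.card ι) := by
  set K : Ω → ℕ := fun ω => #(largeCoords t (v ω))
  have hmass : ∀ ω, 9 / 16 ≤ K ω * ∑ j, v ω j ^ 4 := fun ω => by
    have h := sq_sub_card_mul_sq_le_card_largeCoords_mul_sum_pow_four (v ω) (t := t)
      (by rw [hv]; linarith)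
    rw [hv] at h
    nlinarith [sq_nonneg t]
  have hK : ∀ ω, 1 ≤ K ω := fun ω => Nat.one_le_iff_ne_zero.2 fun h => by
    have := hmass ω
    rw [h] at this
    norm_num at this
  have h₂ := card_filter_card_largeCoords_le v hι hmass hv4 (k := 2) (by norm_num)
  have h₄ := card_filter_card_largeCoords_le v hι hmass hv4 (k := 4) (by norm_num)
  push_cast at h₂ h₄
  have hsum := sum_loBound_le univ K (by rw [card_univ]; linarith) (by rw [card_univ]; linarith)
  rw [card_univ] at hsum
  rw [card_filter_prod_eq_sum (fun ω ε => |∑ j, boolSign (ε j) * v ω j| ≤ t)]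
  push_cast
  calc _ ≤ ∑ ω, loBound (K ω) * 2 ^ Fintype.card ι := sum_le_sum fun ω _ =>
        card_filter_abs_sum_boolSign_mul_le_loBound (v ω) ht (hK ω)
    _ = (∑ ω, loBound (K ω)) * 2 ^ Fintype.card ι := (sum_mul ..).symm
    _ ≤ _ := by
      rw [← mul_assoc]
      gcongr

theorem le_card_filter_lt_abs_sum_boolSign_mul_div [Fintype Ω] [Nonempty Ω] (v : Ω → ι → ℝ)
    {t : ℝ} (ht : 0 ≤ t) (hι : 32 ≤ Fintype.card ι) (hιt : Fintype.card ι * t ^ 2 ≤ 1 / 4)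
    (hv : ∀ ω, ∑ j, v ω j ^ 2 = 1)
    (hv4 : ∑ ω, ∑ j, v ω j ^ 4 ≤ 3 * Fintype.card Ω / Fintype.card ι) :
    (29 / 48 : ℝ) ≤ #{p : Ω × (ι → Bool) | t < |∑ j, boolSign (p.2 j) * v p.1 j|} /
      Fintype.card (Ω × (ι → Bool)) := by
  have hbad := card_filter_abs_sum_boolSign_mul_le_of_sum_pow_four_le v ht hι hιt hv hv4
  have hsplit := congrArg (Nat.cast : ℕ → ℝ) <| card_filter_add_card_filter_not (s := univ)
    fun p : Ω × (ι → Bool) => |∑ j, boolSign (p.2 j) * v p.1 j| ≤ t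
  have htotal : (Fintype.card (Ω × (ι → Bool)) : ℝ) = Fintype.card Ω * 2 ^ Fintype.card ι := by
    simp [Fintype.card_prod]
  push_cast [card_univ, htotal, not_le] at hsplit
  rw [htotal, le_div_iff₀ (by positivity)]
  linarith

end Anticoncentration

end Rademacher

open Rademacher

lemma hadamardMatrix_apply_comm (n : ℕ) (a b : Fin n → Fin 2) :
    hadamardMatrix n a b = hadamardMatrix n b a := by
  simp only [hadamardMatrix, of_apply, and_comm]

lemma hadamardMatrix_transpose (n : ℕ) : (hadamardMatrix n)ᵀ = hadamardMatrix n :=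
  Matrix.ext fun a b => hadamardMatrix_apply_comm n b a

lemma hadamardMatrix_apply_sq (n : ℕ) (a b : Fin n → Fin 2) :
    hadamardMatrix n a b ^ 2 = (2 ^ n)⁻¹ := by
  have h : ∀ i : Fin n,
      (if a i = 1 ∧ b i = 1 then -(1 / √2) else 1 / √2) ^ 2 = (2⁻¹ : ℝ) := fun i => by
    split_ifs <;> simp
  simp only [hadamardMatrix, of_apply, ← prod_pow, h, prod_const, card_univ, Fintype.card_fin,
    inv_pow]

/-- The rows of the `2 × 2` factor are orthonormal; the Kronecker product inherits this
coordinatewise. -/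
lemma hadamardMatrix_mul_self (n : ℕ) : hadamardMatrix n * hadamardMatrix n = 1 := by
  have hfactor : ∀ u w : Fin 2, ∑ v : Fin 2,
      (if u = 1 ∧ v = 1 then -(1 / √2) else 1 / √2) *
        (if v = 1 ∧ w = 1 then -(1 / √2) else 1 / √2) = if u = w then (1 : ℝ) else 0 := by
    have h2 : (√2)⁻¹ * (√2)⁻¹ = (2⁻¹ : ℝ) := by
      rw [← mul_inv, Real.mul_self_sqrt zero_le_two]
    intro u w
    fin_cases u <;> fin_cases w <;> norm_num [Fin.sum_univ_two, h2]
  ext a b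
  simp only [mul_apply, hadamardMatrix, of_apply, ← prod_mul_distrib]
  rw [← Fintype.prod_sum fun i v => (if a i = 1 ∧ v = 1 then -(1 / √2) else 1 / √2) *
    (if v = 1 ∧ b i = 1 then -(1 / √2) else 1 / √2)]
  simp only [hfactor, prod_boole, mem_univ, true_implies, one_apply, funext_iff]

lemma sum_hadamardMatrix_mulVec_sq (n : ℕ) (w : (Fin n → Fin 2) → ℝ) :
    ∑ j, (hadamardMatrix n *ᵥ w) j ^ 2 = ∑ i, w i ^ 2 := by
  simp only [sq]
  change (hadamardMatrix n *ᵥ w) ⬝ᵥ (hadamardMatrix n *ᵥ w) = w ⬝ᵥ w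
  rw [dotProduct_mulVec, ← mulVec_transpose, hadamardMatrix_transpose, mulVec_mulVec,
    hadamardMatrix_mul_self, one_mulVec]

noncomputable def signedHadamardTransform (n : ℕ) (y : (Fin n → Fin 2) → ℝ)
    (d : (Fin n → Fin 2) → Bool) : (Fin n → Fin 2) → ℝ :=
  hadamardMatrix n *ᵥ fun i => boolSign (d i) * y i

lemma signedHadamardTransform_apply (n : ℕ) (y : (Fin n → Fin 2) → ℝ)
    (d : (Fin n → Fin 2) → Bool) (j : Fin n → Fin 2) :
    signedHadamardTransform n y d j = rademacherSum univ (fun i => hadamardMatrix n j i * y i) d :=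
  sum_congr rfl fun i _ => by ring

lemma sum_signedHadamardTransform_sq (n : ℕ) (y : (Fin n → Fin 2) → ℝ)
    (d : (Fin n → Fin 2) → Bool) : ∑ j, signedHadamardTransform n y d j ^ 2 = ∑ i, y i ^ 2 := by
  simp only [signedHadamardTransform, sum_hadamardMatrix_mulVec_sq, mul_pow, boolSign_sq, one_mul]

lemma sum_sum_signedHadamardTransform_pow_four_le (n : ℕ) {y : (Fin n → Fin 2) → ℝ}
    (hy : ∑ i, y i ^ 2 = 1) :
    ∑ d, ∑ j, signedHadamardTransform n y d j ^ 4 ≤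
      3 * Fintype.card ((Fin n → Fin 2) → Bool) / Fintype.card (Fin n → Fin 2) := by
  have hcoeff : ∀ j, ∑ i, (hadamardMatrix n j i * y i) ^ 2 = (2 ^ n)⁻¹ := fun j => by
    simp only [mul_pow, hadamardMatrix_apply_sq, ← mul_sum, hy, mul_one]
  rw [sum_comm]
  calc _ ≤ ∑ j : Fin n → Fin 2, 3 * 2 ^ Fintype.card (Fin n → Fin 2) * ((2 : ℝ) ^ n)⁻¹ ^ 2 :=
        sum_le_sum fun j _ => by
          simpa only [signedHadamardTransform_apply, hcoeff] using
            sum_rademacherSum_pow_four_le univ fun i => hadamardMatrix n j i * y i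
    _ = _ := by
      simp only [sum_const, card_univ, Fintype.card_fun, Fintype.card_bool, Fintype.card_fin,
        nsmul_eq_mul]
      push_cast
      field_simp

lemma sum_diagonal_mul_hadamardMatrix_mulVec_mul (n : ℕ) (y : (Fin n → Fin 2) → ℝ)
    (d ε : (Fin n → Fin 2) → Bool) :
    ∑ i, ((diagonal (fun i => boolSign (d i)) * hadamardMatrix n) *ᵥ
        fun j => boolSign (ε j) / √(2 ^ n)) i * y i =
      (√(2 ^ n))⁻¹ * ∑ j, boolSign (ε j) * signedHadamardTransform n y d j := by
  have hD : y ᵥ* diagonal (fun i => boolSign (d i)) = fun i => boolSign (d i) * y i :=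
    funext fun i => by rw [vecMul_diagonal, mul_comm]
  change (_ *ᵥ _) ⬝ᵥ y = _
  rw [dotProduct_comm, dotProduct_mulVec, ← vecMul_vecMul, ← mulVec_transpose,
    hadamardMatrix_transpose, hD, dotProduct, mul_sum]
  exact sum_congr rfl fun j _ => by unfold signedHadamardTransform; ring

lemma lt_abs_inv_sqrt_two_pow_mul_iff (n : ℕ) (S : ℝ) :
    1 / (2 * (2 : ℝ) ^ n) < |(√(2 ^ n))⁻¹ * S| ↔ 1 / (2 * √(2 ^ n)) < |S| := by
  have hsqrt : 0 < √(2 ^ n : ℝ) := by positivity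
  have hthreshold : 1 / (2 * 2 ^ n) * √(2 ^ n : ℝ) = 1 / (2 * √(2 ^ n)) := by
    have := Real.mul_self_sqrt (by positivity : (0 : ℝ) ≤ 2 ^ n)
    field_simp
    linarith
  rw [abs_mul, abs_inv, abs_of_pos hsqrt, inv_mul_eq_div, lt_div_iff₀ hsqrt, hthreshold]

lemma card_mul_one_div_two_mul_sqrt_sq (n : ℕ) :
    (Fintype.card (Fin n → Fin 2) : ℝ) * (1 / (2 * √(2 ^ n))) ^ 2 = 1 / 4 := by
  rw [div_pow, mul_pow, Real.sq_sqrt (by positivity)]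
  simp only [Fintype.card_pi, Fintype.card_fin, prod_const, card_univ]
  push_cast
  field_simp
  norm_num

/-- **oblivious state preparation.** Let `N = 2^n` with `n ≥ 5`, let `y` be
any fixed unit vector in `ℝ^N`, let `d` be uniform on `{±1}^N` and `z` uniform on
`{±1/√N}^N`, independently (here both encoded by uniform Boolean vectors, with
probability given by counting over the uniform finite sample space), and set
`x = D·H_N·z` with `D = diag d`. Then `Pr[|⟨x,y⟩| > 1/(2N)] ≥ 3/5`. -/
theorem oblivious_state_preparation (n : ℕ) (hn : 5 ≤ n)
    (y : (Fin n → Fin 2) → ℝ) (hy : ∑ i, y i ^ 2 = 1) :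
    (3 : ℝ) / 5 ≤
      ((Finset.univ.filter
          (fun p : ((Fin n → Fin 2) → Bool) × ((Fin n → Fin 2) → Bool) =>
            1 / (2 * (2 : ℝ) ^ n) <
              |∑ i, (Matrix.mulVec
                  (Matrix.diagonal (fun i => if p.1 i then (1 : ℝ) else -1) *
                    hadamardMatrix n)
                  (fun j => (if p.2 j then (1 : ℝ) else -1) / Real.sqrt (2 ^ n))) i
                * y i|)).card : ℝ)
        / Fintype.card (((Fin n → Fin 2) → Bool) × ((Fin n → Fin 2) → Bool)) := by
  have hsign : ∀ b : Bool, (if b then (1 : ℝ) else -1) = boolSign b := fun _ => rfl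
  simp only [hsign, sum_diagonal_mul_hadamardMatrix_mulVec_mul, lt_abs_inv_sqrt_two_pow_mul_iff]
  refine le_trans (by norm_num) (le_card_filter_lt_abs_sum_boolSign_mul_div
    (signedHadamardTransform n y) (by positivity) ?_ (card_mul_one_div_two_mul_sqrt_sq n).le
    (fun d => (sum_signedHadamardTransform_sq n y d).trans hy)
    (sum_sum_signedHadamardTransform_pow_four_le n hy))
  simpa using Nat.pow_le_pow_right two_pos hn
end

section
/- Let M, N ≥ 1, let U be a unitary matrix on ℂ^M ⊗ ℂ^N, let H be an N×N complex matrix, and let a > 0, h ∈ ℝ, ε ≥ 0 be such that ‖H − a·Ũ‖ ≤ ε, where Ũ = (⟨e₀| ⊗ I_N)·U·(|e₀⟩ ⊗ I_N) is the top-left N×N block of U. Then there exists a unitary matrix V on ℂ² ⊗ ℂ^M ⊗ ℂ^N such that ‖(H − h·I_N) − (a + |h|)·Ṽ‖ ≤ ε, where Ṽ = (⟨e₀| ⊗ ⟨e₀| ⊗ I_N)·V·(|e₀⟩ ⊗ |e₀⟩ ⊗ I_N). -/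
/-!
With `t = a + |h|` and `σ = ±1` chosen so that `|h| σ = -h`, the shifted matrix satisfies
`H - h I - t ((a/t) Ũ + (|h|/t) σ I) = H - a Ũ`, so it suffices to block-encode the convex
combination `(a/t) U + (|h|/t) σ I` of two unitaries exactly. This is the linear combination of
unitaries: conjugating `SELECT(U₀, U₁) = |0⟩⟨0| ⊗ U₀ + |1⟩⟨1| ⊗ U₁` by `W ⊗ I`, with `W` a real
rotation whose first column is `(√p, √q)`, puts `p U₀ + q U₁` in the `|0⟩` block.
-/

set_option autoImplicit false

open scoped Matrix.Norms.L2Operator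

open Matrix Kronecker

namespace Matrix

lemma sum_kronecker {R ι l m n p : Type*} [CommSemiring R] (s : Finset ι)
    (A : ι → Matrix l m R) (B : Matrix n p R) :
    (∑ k ∈ s, A k) ⊗ₖ B = ∑ k ∈ s, A k ⊗ₖ B := by
  ext
  simp [Matrix.sum_apply, Finset.sum_mul]

variable {R κ ι : Type*} [CommRing R] [StarRing R] [Fintype κ] [DecidableEq κ] [Fintype ι]
  [DecidableEq ι]

/-- The `SELECT` operator `∑ₖ |k⟩⟨k| ⊗ Uₖ` of the linear-combination-of-unitaries technique. -/
def select (U : κ → Matrix ι ι R) : Matrix (κ × ι) (κ × ι) R :=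
  ∑ k, single k k 1 ⊗ₖ U k

lemma select_mem_unitaryGroup {U : κ → Matrix ι ι R} (hU : ∀ k, U k ∈ unitaryGroup ι R) :
    select U ∈ unitaryGroup (κ × ι) R := by
  rw [mem_unitaryGroup_iff', select, star_eq_conjTranspose]
  simp only [conjTranspose_sum, conjTranspose_kronecker, conjTranspose_single, star_one,
    Finset.sum_mul_sum, ← mul_kronecker_mul]
  rw [← one_kronecker_one, ← sum_single_one, sum_kronecker]
  refine Finset.sum_congr rfl fun k _ => ?_
  have hoff : ∀ l ≠ k,
      (single k k (1 : R) * single l l 1 : Matrix κ κ R) ⊗ₖ ((U k)ᴴ * U l) = 0 := fun l hl => by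
    simp [hl.symm]
  rw [Finset.sum_eq_single k (fun l _ => hoff l) (by simp), single_mul_single_same, mul_one,
    ← star_eq_conjTranspose, mem_unitaryGroup_iff'.mp (hU k)]

lemma submatrix_conj_kronecker_one_select (W : Matrix κ κ R) (U : κ → Matrix ι ι R) (i : κ) :
    ((W ⊗ₖ (1 : Matrix ι ι R))ᴴ * select U * (W ⊗ₖ 1)).submatrix (Prod.mk i) (Prod.mk i) =
      ∑ k, (star (W k i) * W k i) • U k := by
  have hdiag : ∀ k, (Wᴴ * single k k (1 : R) * W : Matrix κ κ R) i i = star (W k i) * W k i :=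
    fun k => by simp [mul_apply, single_apply, ite_and]
  simp only [select, conjTranspose_kronecker, conjTranspose_one, Finset.mul_sum, Finset.sum_mul,
    ← mul_kronecker_mul, one_mul, mul_one]
  ext x y
  simp [Matrix.sum_apply, hdiag]

end Matrix

lemma rotation_mem_unitaryGroup {c s : ℝ} (hcs : c ^ 2 + s ^ 2 = 1) :
    !![(c : ℂ), -(s : ℂ); (s : ℂ), (c : ℂ)] ∈ unitaryGroup (Fin 2) ℂ := by
  have hcsC : (c : ℂ) ^ 2 + (s : ℂ) ^ 2 = 1 := by exact_mod_cast hcs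
  rw [mem_unitaryGroup_iff']
  ext i j
  fin_cases i <;> fin_cases j <;>
    simp [mul_apply, Fin.sum_univ_two] <;> first | ring1 | linear_combination hcsC

theorem exists_mem_unitaryGroup_submatrix_eq_add {ι : Type*} [Fintype ι] [DecidableEq ι]
    {U₀ U₁ : Matrix ι ι ℂ} (hU₀ : U₀ ∈ unitaryGroup ι ℂ) (hU₁ : U₁ ∈ unitaryGroup ι ℂ)
    {p q : ℝ} (hp : 0 ≤ p) (hq : 0 ≤ q) (hpq : p + q = 1) :
    ∃ V ∈ unitaryGroup (Fin 2 × ι) ℂ,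
      V.submatrix (Prod.mk 0) (Prod.mk 0) = (p : ℂ) • U₀ + (q : ℂ) • U₁ := by
  set W : Matrix (Fin 2) (Fin 2) ℂ := !![(√p : ℂ), -(√q : ℂ); (√q : ℂ), (√p : ℂ)]
  have hW : W ⊗ₖ (1 : Matrix ι ι ℂ) ∈ unitaryGroup (Fin 2 × ι) ℂ :=
    kronecker_mem_unitary (rotation_mem_unitaryGroup (by simp [hp, hq, hpq])) (one_mem _)
  have hS : select ![U₀, U₁] ∈ unitaryGroup (Fin 2 × ι) ℂ :=
    select_mem_unitaryGroup (by simp [Fin.forall_fin_two, hU₀, hU₁])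
  refine ⟨(W ⊗ₖ 1)ᴴ * select ![U₀, U₁] * (W ⊗ₖ 1),
    mul_mem (mul_mem (Unitary.star_mem hW) hS) hW, ?_⟩
  have hsq : ∀ x : ℝ, 0 ≤ x → (√x : ℂ) * √x = x := fun x hx => by
    rw [← Complex.ofReal_mul, Real.mul_self_sqrt hx]
  simp [submatrix_conj_kronecker_one_select, Fin.sum_univ_two, W, hsq p hp, hsq q hq]

lemma exists_mem_unitary_abs_mul_eq (x : ℝ) : ∃ σ ∈ unitary ℂ, ((|x| : ℝ) : ℂ) * σ = x := by
  rcases le_or_gt 0 x with hx | hx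
  · exact ⟨1, one_mem _, by simp [abs_of_nonneg hx]⟩
  · exact ⟨-1, by simp [Unitary.mem_iff], by simp [abs_of_neg hx]⟩

theorem block_encoding_shift_general (M N : ℕ) [NeZero M]
    (U : Matrix (Fin M × Fin N) (Fin M × Fin N) ℂ)
    (hU : U ∈ Matrix.unitaryGroup (Fin M × Fin N) ℂ)
    (H : Matrix (Fin N) (Fin N) ℂ) (a : ℝ) (ha : 0 < a) (h : ℝ) (ε : ℝ)
    (henc : ‖H - (a : ℂ) • Matrix.of (fun j k : Fin N => U (0, j) (0, k))‖ ≤ ε) :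
    ∃ V : Matrix (Fin 2 × Fin M × Fin N) (Fin 2 × Fin M × Fin N) ℂ,
      V ∈ Matrix.unitaryGroup (Fin 2 × Fin M × Fin N) ℂ ∧
      ‖(H - (h : ℂ) • 1) -
          ((a + |h| : ℝ) : ℂ) • Matrix.of (fun j k : Fin N => V (0, 0, j) (0, 0, k))‖
        ≤ ε := by
  set t := a + |h|
  have ht : 0 < t := by positivity
  obtain ⟨σ, hσ, hσh⟩ := exists_mem_unitary_abs_mul_eq (-h)
  rw [abs_neg] at hσh
  obtain ⟨V, hV, hVblock⟩ := exists_mem_unitaryGroup_submatrix_eq_add hU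
    (Unitary.smul_mem_of_mem hσ (one_mem _)) (div_nonneg ha.le ht.le)
    (div_nonneg (abs_nonneg h) ht.le) ((add_div a |h| t).symm.trans (div_self ht.ne'))
  refine ⟨V, hV, le_of_eq_of_le ?_ henc⟩
  have hblock : Matrix.of (fun j k : Fin N => V (0, 0, j) (0, 0, k)) =
      ((a / t : ℝ) : ℂ) • Matrix.of (fun j k : Fin N => U (0, j) (0, k)) +
        (((|h| / t : ℝ) : ℂ) * σ) • 1 := by
    ext j k
    simpa [one_apply, mul_assoc] using congr_fun₂ hVblock (0, j) (0, k)
  have hscale₁ : (t : ℂ) * ((a / t : ℝ) : ℂ) = a := by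
    rw [← Complex.ofReal_mul, mul_div_cancel₀ _ ht.ne']
  have hscale₂ : (t : ℂ) * (((|h| / t : ℝ) : ℂ) * σ) = -h := by
    rw [← mul_assoc, ← Complex.ofReal_mul, mul_div_cancel₀ _ ht.ne', hσh, Complex.ofReal_neg]
  rw [hblock, smul_add, smul_smul, smul_smul, hscale₁, hscale₂]
  congr 1
  module

/-- **QSHIFT.** If a unitary `U` on `ℂ^M ⊗ ℂ^N` block-encodes `H` with
normalization `a` and error `ε` (i.e. `‖H - a·Ũ‖ ≤ ε`, where `Ũ` is the compression of
`U` onto the ancilla basis state `e₀`), then for any shift `h ∈ ℝ` there is a unitary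
`V` on `ℂ² ⊗ ℂ^M ⊗ ℂ^N` block-encoding `H - h·I` with normalization `a + |h|` and the
same error `ε`. -/
theorem block_encoding_shift (M N : ℕ) [NeZero M]
    (U : Matrix (Fin M × Fin N) (Fin M × Fin N) ℂ)
    (hU : U ∈ Matrix.unitaryGroup (Fin M × Fin N) ℂ)
    (H : Matrix (Fin N) (Fin N) ℂ) (a : ℝ) (ha : 0 < a) (h : ℝ) (ε : ℝ) (hε : 0 ≤ ε)
    (henc : ‖H - (a : ℂ) • Matrix.of (fun j k : Fin N => U (0, j) (0, k))‖ ≤ ε) :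
    ∃ V : Matrix (Fin 2 × Fin M × Fin N) (Fin 2 × Fin M × Fin N) ℂ,
      V ∈ Matrix.unitaryGroup (Fin 2 × Fin M × Fin N) ℂ ∧
      ‖(H - (h : ℂ) • 1) -
          ((a + |h| : ℝ) : ℂ) • Matrix.of (fun j k : Fin N => V (0, 0, j) (0, 0, k))‖
        ≤ ε :=
  block_encoding_shift_general M N U hU H a ha h ε henc
end

section
/- Let N ≥ 1 and let X be an N×N complex matrix. Index the set {v} ⊔ {s_1,…,s_N} ⊔ {t_1,…,t_N} and define the (2N+1)×(2N+1) matrix A by: A(v, s_i) = 1 for all i, A(s_i, t_j) = X_{ij} for all i,j, A(t_j, v) = 1 for all j, and all other entries 0. Then the cube A³ satisfies: (A³)(v,v) = Σ_{i,j} X_{ij}; (A³)(s_i, s_j) = Σ_{l} X_{il} for all i, j; (A³)(t_l, t_m) = Σ_{i} X_{im} for all l, m; and every other entry of A³ is zero. -/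
set_option autoImplicit false

/-- The adjacency matrix of the directed tripartite gadget: a utility node `v`
(the `Sum.inl` index), `N` sources (first `Sum.inr ∘ Sum.inl` block) and `N` targets
(second `Sum.inr ∘ Sum.inr` block), with edges `v → s_i` of weight `1`,
`s_i → t_j` of weight `X i j`, and `t_j → v` of weight `1`. -/
def gadgetMatrix (N : ℕ) (X : Matrix (Fin N) (Fin N) ℂ) :
    Matrix (Unit ⊕ Fin N ⊕ Fin N) (Unit ⊕ Fin N ⊕ Fin N) ℂ :=
  Matrix.of fun p q =>
    match p, q with
    | Sum.inl _, Sum.inr (Sum.inl _) => 1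
    | Sum.inr (Sum.inl i), Sum.inr (Sum.inr j) => X i j
    | Sum.inr (Sum.inr _), Sum.inl _ => 1
    | _, _ => 0

/-- The entries of the cube of the gadget matrix:
`(A³)(v,v) = Σ_{i,j} X_{ij}`, `(A³)(s_i,s_j) = Σ_l X_{il}`, `(A³)(t_l,t_m) = Σ_i X_{im}`,
and all other entries vanish. -/
theorem gadgetMatrix_cube_entries (N : ℕ) (X : Matrix (Fin N) (Fin N) ℂ) :
    ((gadgetMatrix N X ^ 3) (Sum.inl ()) (Sum.inl ()) = ∑ i, ∑ j, X i j) ∧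
    (∀ i j : Fin N,
      (gadgetMatrix N X ^ 3) (Sum.inr (Sum.inl i)) (Sum.inr (Sum.inl j)) = ∑ l, X i l) ∧
    (∀ l m : Fin N,
      (gadgetMatrix N X ^ 3) (Sum.inr (Sum.inr l)) (Sum.inr (Sum.inr m)) = ∑ i, X i m) ∧
    (∀ q, (gadgetMatrix N X ^ 3) (Sum.inl ()) (Sum.inr q) = 0) ∧
    (∀ p, (gadgetMatrix N X ^ 3) (Sum.inr p) (Sum.inl ()) = 0) ∧
    (∀ i j : Fin N,
      (gadgetMatrix N X ^ 3) (Sum.inr (Sum.inl i)) (Sum.inr (Sum.inr j)) = 0) ∧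
    (∀ i j : Fin N,
      (gadgetMatrix N X ^ 3) (Sum.inr (Sum.inr i)) (Sum.inr (Sum.inl j)) = 0) := by
  have h3 : gadgetMatrix N X ^ 3 = gadgetMatrix N X * gadgetMatrix N X * gadgetMatrix N X := by
    rw [pow_succ, pow_succ, pow_one]
  refine ⟨?_, fun i j => ?_, fun l m => ?_, fun q => ?_, fun p => ?_,
    fun i j => ?_, fun i j => ?_⟩
  case refine_4 =>
    rcases q with q | q <;>
      (rw [h3]; simp [Matrix.mul_apply, gadgetMatrix, Matrix.of_apply, Fintype.sum_sum_type])
  case refine_5 =>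
    rcases p with p | p <;>
      (rw [h3]; simp [Matrix.mul_apply, gadgetMatrix, Matrix.of_apply, Fintype.sum_sum_type])
  case refine_1 =>
    rw [h3]
    simp [Matrix.mul_apply, gadgetMatrix, Matrix.of_apply, Fintype.sum_sum_type,
      Finset.mul_sum, Finset.sum_mul]
    exact Finset.sum_comm
  all_goals
    rw [h3]
    simp [Matrix.mul_apply, gadgetMatrix, Matrix.of_apply, Fintype.sum_sum_type,
      Finset.mul_sum, Finset.sum_mul]
end
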